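/- Let f : ℤ_p → ℤ_p be a 1-Lipschitz function with coordinate functions φ_k of the linear form φ_k(x_0,...,x_k) = α_0^{(k)} x_0 + ... + α_k^{(k)} x_k (mod p). Then f preserves the Haar measure on ℤ_p if and only if α_k^{(k)} ≢ 0 (mod p) for all k ≥ 0. -/

import Mathlib

/-!
The digit map `φ_k` depends on `x_k` only through the term `α_k^{(k)} x_k`. If that coefficient
is nonzero, the digits of `x` are recovered one by one from those of `f x`, so every reduction
`f mod p^n` is injective, hence bijective, and `f` then maps each residue disc of radius `p^{-n}`
onto one; as these discs generate the Borel sets, this pins down the Haar measure. If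
`α_k^{(k)} = 0`, then `f mod p^{k+1}` only sees `x mod p^k`, so it identifies `0` and `p^k`,
misses some residue class, and the disc of that class has measure `p^{-(k+1)}` but an empty
preimage.
-/

open MeasureTheory

variable (p : ℕ) [Fact p.Prime]

noncomputable instance : MeasurableSpace ℤ_[p] := borel _
instance : BorelSpace ℤ_[p] := ⟨rfl⟩

/-- The normalized Haar measure on `ℤ_[p]` (total mass 1). -/
noncomputable def haarZp : Measure ℤ_[p] := Measure.addHaarMeasure ⊤

/-- The k-th digit of the canonical p-adic expansion of `x`. -/
noncomputable def digit (x : ℤ_[p]) (k : ℕ) : ℕ := x.appr (k + 1) / p ^ k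

open PadicInt Function

variable {p}

section Digits

lemma digit_lt (x : ℤ_[p]) (k : ℕ) : digit p x k < p :=
  Nat.div_lt_of_lt_mul (by simpa [pow_succ] using x.appr_lt (k + 1))

lemma appr_succ_mod (x : ℤ_[p]) (k : ℕ) : x.appr (k + 1) % p ^ k = x.appr k := by
  have h := (Nat.modEq_iff_dvd' (x.appr_mono k.le_succ)).mpr
    (x.dvd_appr_sub_appr k (k + 1) k.le_succ)
  rw [← h, Nat.mod_eq_of_lt (x.appr_lt k)]

lemma appr_succ_eq_add_digit (x : ℤ_[p]) (k : ℕ) :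
    x.appr (k + 1) = x.appr k + p ^ k * digit p x k := by
  rw [digit, ← appr_succ_mod x k, Nat.mod_add_div]

lemma appr_succ_eq_iff {x y : ℤ_[p]} {n : ℕ} :
    x.appr (n + 1) = y.appr (n + 1) ↔ x.appr n = y.appr n ∧ digit p x n = digit p y n := by
  constructor
  · intro h
    exact ⟨by rw [← appr_succ_mod x, ← appr_succ_mod y, h], by rw [digit, digit, h]⟩
  · rintro ⟨ha, hd⟩
    rw [appr_succ_eq_add_digit, appr_succ_eq_add_digit, ha, hd]

lemma appr_eq_iff_digit_eq {x y : ℤ_[p]} {n : ℕ} :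
    x.appr n = y.appr n ↔ ∀ k < n, digit p x k = digit p y k := by
  induction n with
  | zero => exact iff_of_true rfl fun k hk => absurd hk k.not_lt_zero
  | succ n ih => rw [appr_succ_eq_iff, ih, Nat.forall_lt_succ_right]

lemma natCast_digit_inj {x y : ℤ_[p]} {k : ℕ} :
    (digit p x k : ZMod p) = digit p y k ↔ digit p x k = digit p y k := by
  rw [ZMod.natCast_eq_natCast_iff', Nat.mod_eq_of_lt (digit_lt x k),
    Nat.mod_eq_of_lt (digit_lt y k)]

end Digits

section Reduction

lemma toZModPow_eq_iff_appr_eq {x y : ℤ_[p]} {n : ℕ} :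
    toZModPow n x = toZModPow n y ↔ x.appr n = y.appr n := by
  change ((x.appr n : ℕ) : ZMod (p ^ n)) = y.appr n ↔ _
  rw [ZMod.natCast_eq_natCast_iff', Nat.mod_eq_of_lt (x.appr_lt n),
    Nat.mod_eq_of_lt (y.appr_lt n)]

lemma toZModPow_eq_iff_norm_sub_le {x y : ℤ_[p]} {n : ℕ} :
    toZModPow n x = toZModPow n y ↔ ‖x - y‖ ≤ (p : ℝ) ^ (-(n : ℤ)) := by
  rw [norm_le_pow_iff_mem_span_pow, ← ker_toZModPow, RingHom.mem_ker, map_sub, sub_eq_zero]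

lemma toZModPow_natCast_val {n : ℕ} (a : ZMod (p ^ n)) : toZModPow n (a.val : ℤ_[p]) = a := by
  rw [map_natCast, ZMod.natCast_zmod_val]

lemma preimage_toZModPow_singleton (n : ℕ) (y : ℤ_[p]) :
    toZModPow n ⁻¹' {toZModPow n y} = Metric.closedBall y ((p : ℝ) ^ (-(n : ℤ))) := by
  ext x
  rw [Set.mem_preimage, Set.mem_singleton_iff, toZModPow_eq_iff_norm_sub_le, Metric.mem_closedBall,
    dist_eq_norm]

lemma isOpen_preimage_toZModPow_singleton (n : ℕ) (a : ZMod (p ^ n)) :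
    IsOpen (toZModPow n ⁻¹' {a}) := by
  rw [← toZModPow_natCast_val a, preimage_toZModPow_singleton]
  exact IsUltrametricDist.isOpen_closedBall _
    (zpow_pos (Nat.cast_pos.mpr (Fact.out : p.Prime).pos) _).ne'

lemma measurableSet_preimage_toZModPow_singleton (n : ℕ) (a : ZMod (p ^ n)) :
    MeasurableSet (toZModPow n ⁻¹' {a}) :=
  (isOpen_preimage_toZModPow_singleton n a).measurableSet

variable (p) in
def residueDiscs : Set (Set ℤ_[p]) := {s | ∃ n a, toZModPow n ⁻¹' {a} = s}

lemma isTopologicalBasis_residueDiscs : TopologicalSpace.IsTopologicalBasis (residueDiscs p) := by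
  refine TopologicalSpace.isTopologicalBasis_of_isOpen_of_nhds ?_ ?_
  · rintro _ ⟨n, a, rfl⟩
    exact isOpen_preimage_toZModPow_singleton n a
  · intro x U hx hU
    obtain ⟨ε, hε, hball⟩ := Metric.isOpen_iff.mp hU x hx
    obtain ⟨n, hn⟩ := exists_pow_neg_lt p hε
    refine ⟨_, ⟨n, toZModPow n x, rfl⟩, rfl, ?_⟩
    rw [preimage_toZModPow_singleton]
    exact (Metric.closedBall_subset_ball hn).trans hball

lemma isPiSystem_residueDiscs : IsPiSystem (residueDiscs p) := by
  rintro _ ⟨n, a, rfl⟩ _ ⟨m, b, rfl⟩ ⟨x, hxa, hxb⟩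
  wlog hmn : m ≤ n generalizing n m a b
  · rw [Set.inter_comm]
    exact this m b n a hxb hxa (le_of_not_ge hmn)
  refine ⟨n, a, (Set.inter_eq_left.mpr fun y hy => ?_).symm⟩
  simp only [Set.mem_preimage, Set.mem_singleton_iff] at hxa hxb hy ⊢
  rw [← cast_toZModPow m n hmn, hy, ← hxa, cast_toZModPow m n hmn, hxb]

end Reduction

section Haar

instance : (haarZp p).IsAddLeftInvariant := by
  unfold haarZp
  infer_instance

instance : IsProbabilityMeasure (haarZp p) := by
  refine ⟨?_⟩
  rw [haarZp, ← TopologicalSpace.PositiveCompacts.coe_top, Measure.addHaarMeasure_self]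

lemma haarZp_preimage_toZModPow_singleton_eq (n : ℕ) (a b : ZMod (p ^ n)) :
    haarZp p (toZModPow n ⁻¹' {a}) = haarZp p (toZModPow n ⁻¹' {b}) := by
  have htranslate : toZModPow n ⁻¹' {a} =
      (fun x => (((b - a).val : ℕ) : ℤ_[p]) + x) ⁻¹' (toZModPow n ⁻¹' {b}) := by
    ext x
    simp only [Set.mem_preimage, Set.mem_singleton_iff, map_add, toZModPow_natCast_val]
    constructor <;> intro h <;> linear_combination h
  rw [htranslate, measure_preimage_add]

lemma haarZp_preimage_toZModPow_singleton (n : ℕ) (a : ZMod (p ^ n)) :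
    haarZp p (toZModPow n ⁻¹' {a}) = ((p : ENNReal) ^ n)⁻¹ := by
  classical
  refine ENNReal.eq_inv_of_mul_eq_one_left ?_
  have hsum := sum_measure_preimage_singleton (μ := haarZp p) Finset.univ
    fun b _ => measurableSet_preimage_toZModPow_singleton n b
  simp only [haarZp_preimage_toZModPow_singleton_eq n _ a, Finset.sum_const, Finset.card_univ,
    ZMod.card, Finset.coe_univ, Set.preimage_univ, measure_univ, nsmul_eq_mul] at hsum
  rw [mul_comm, ← hsum]
  norm_cast

end Haar

section Lipschitz

variable (f : ℤ_[p] → ℤ_[p])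

/-- For 1-Lipschitz `f` this is `f mod p^n`; in general it depends on the chosen
representatives `a.val`. -/
noncomputable def reductionMod (n : ℕ) (a : ZMod (p ^ n)) : ZMod (p ^ n) :=
  toZModPow n (f a.val)

variable {f}

lemma LipschitzWith.toZModPow_apply_eq (hf : LipschitzWith 1 f) {n : ℕ} {x y : ℤ_[p]}
    (h : toZModPow n x = toZModPow n y) : toZModPow n (f x) = toZModPow n (f y) := by
  rw [toZModPow_eq_iff_norm_sub_le, ← dist_eq_norm] at h ⊢
  have hdist := hf.dist_le_mul x y
  rw [NNReal.coe_one, one_mul] at hdist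
  exact hdist.trans h

lemma LipschitzWith.toZModPow_comp (hf : LipschitzWith 1 f) (n : ℕ) :
    toZModPow n ∘ f = reductionMod f n ∘ toZModPow n :=
  funext fun _ => hf.toZModPow_apply_eq (toZModPow_natCast_val _).symm

theorem LipschitzWith.measurePreserving_haarZp_iff (hf : LipschitzWith 1 f) :
    MeasurePreserving f (haarZp p) (haarZp p) ↔ ∀ n, Bijective (reductionMod f n) := by
  have hmeas : Measurable f := hf.continuous.measurable
  have hpreimage (n : ℕ) (S : Set (ZMod (p ^ n))) :
      f ⁻¹' (toZModPow n ⁻¹' S) = toZModPow n ⁻¹' (reductionMod f n ⁻¹' S) := by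
    rw [← Set.preimage_comp, ← Set.preimage_comp, hf.toZModPow_comp]
  constructor
  · intro hmp n
    refine Finite.surjective_iff_bijective.mp fun a => ?_
    by_contra ha
    have hmiss : reductionMod f n ⁻¹' {a} = ∅ :=
      Set.eq_empty_of_forall_notMem fun b hb => ha ⟨b, hb⟩
    have h :=
      hmp.measure_preimage (measurableSet_preimage_toZModPow_singleton n a).nullMeasurableSet
    rw [hpreimage, hmiss, Set.preimage_empty, measure_empty,
      haarZp_preimage_toZModPow_singleton] at h
    exact ENNReal.inv_ne_zero.mpr (ENNReal.pow_ne_top (ENNReal.natCast_ne_top p)) h.symm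
  · intro hbij
    refine ⟨hmeas, ext_of_generate_finite _ isTopologicalBasis_residueDiscs.borel_eq_generateFrom
      isPiSystem_residueDiscs ?_ (by rw [Measure.map_apply hmeas .univ, Set.preimage_univ])⟩
    rintro _ ⟨n, a, rfl⟩
    obtain ⟨b, rfl⟩ := (hbij n).surjective a
    rw [Measure.map_apply hmeas (measurableSet_preimage_toZModPow_singleton n _), hpreimage,
      ← Set.image_singleton, (hbij n).injective.preimage_image,
      haarZp_preimage_toZModPow_singleton, Set.image_singleton,
      haarZp_preimage_toZModPow_singleton]

end Lipschitz

section LinearCoordinates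

variable {f : ℤ_[p] → ℤ_[p]} {α : (k : ℕ) → Fin (k + 1) → ZMod p}

variable (f α) in
def HasLinearCoordinates : Prop :=
  ∀ x k, (digit p (f x) k : ZMod p) = ∑ i, α k i * (digit p x i : ZMod p)

namespace HasLinearCoordinates

lemma natCast_digit_sub_digit (hf : HasLinearCoordinates f α) {x y : ℤ_[p]} {k : ℕ}
    (h : ∀ i < k, digit p x i = digit p y i) :
    (digit p (f x) k : ZMod p) - digit p (f y) k =
      α k (Fin.last k) * ((digit p x k : ZMod p) - digit p y k) := by
  have hlow : ∑ i : Fin k, α k i.castSucc * (digit p x (i.castSucc : ℕ) : ZMod p) =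
      ∑ i : Fin k, α k i.castSucc * (digit p y (i.castSucc : ℕ) : ZMod p) :=
    Finset.sum_congr rfl fun i _ => by rw [Fin.val_castSucc, h i i.isLt]
  rw [hf, hf, Fin.sum_univ_castSucc, Fin.sum_univ_castSucc, hlow, Fin.val_last]
  ring

lemma appr_eq_of_appr_apply_eq (hf : HasLinearCoordinates f α)
    (hα : ∀ k, α k (Fin.last k) ≠ 0) {x y : ℤ_[p]} :
    ∀ {n}, (f x).appr n = (f y).appr n → x.appr n = y.appr n
  | 0, _ => rfl
  | n + 1, h => by
    obtain ⟨hlow, hdigit⟩ := appr_succ_eq_iff.mp h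
    have hx := hf.appr_eq_of_appr_apply_eq hα hlow
    refine appr_succ_eq_iff.mpr ⟨hx, natCast_digit_inj.mp ?_⟩
    have hdiff := hf.natCast_digit_sub_digit (appr_eq_iff_digit_eq.mp hx)
    rw [hdigit, sub_self, eq_comm, mul_eq_zero, sub_eq_zero] at hdiff
    exact hdiff.resolve_left (hα n)

lemma reductionMod_injective (hf : HasLinearCoordinates f α)
    (hα : ∀ k, α k (Fin.last k) ≠ 0) (n : ℕ) : Injective (reductionMod f n) := by
  intro a b h
  rw [← toZModPow_natCast_val a, ← toZModPow_natCast_val b, toZModPow_eq_iff_appr_eq]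
  exact hf.appr_eq_of_appr_apply_eq hα (toZModPow_eq_iff_appr_eq.mp h)

lemma toZModPow_succ_apply_eq (hf : HasLinearCoordinates f α) (hlip : LipschitzWith 1 f)
    {k : ℕ} (hk : α k (Fin.last k) = 0) {x y : ℤ_[p]} (h : toZModPow k x = toZModPow k y) :
    toZModPow (k + 1) (f x) = toZModPow (k + 1) (f y) := by
  have hlow := toZModPow_eq_iff_appr_eq.mp (hlip.toZModPow_apply_eq h)
  rw [toZModPow_eq_iff_appr_eq] at h ⊢
  refine appr_succ_eq_iff.mpr ⟨hlow, natCast_digit_inj.mp ?_⟩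
  have hdiff := hf.natCast_digit_sub_digit (appr_eq_iff_digit_eq.mp h)
  rwa [hk, zero_mul, sub_eq_zero] at hdiff

lemma not_injective_reductionMod (hf : HasLinearCoordinates f α) (hlip : LipschitzWith 1 f)
    {k : ℕ} (hk : α k (Fin.last k) = 0) : ¬ Injective (reductionMod f (k + 1)) := by
  have hcast (m : ℕ) : toZModPow m ((p : ℤ_[p]) ^ k) = ((p ^ k : ℕ) : ZMod (p ^ m)) := by
    rw [map_pow, map_natCast, Nat.cast_pow]
  have hclash := hf.toZModPow_succ_apply_eq hlip hk
    (x := (p : ℤ_[p]) ^ k) (y := 0) (by rw [hcast, ZMod.natCast_self, map_zero])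
  intro hinj
  have h := @hinj (toZModPow (k + 1) ((p : ℤ_[p]) ^ k)) (toZModPow (k + 1) 0) <| by
    rwa [← comp_apply (f := reductionMod f _), ← comp_apply (f := reductionMod f _),
      ← hlip.toZModPow_comp]
  rw [hcast, map_zero, ZMod.natCast_eq_zero_iff,
    Nat.pow_dvd_pow_iff_le_right (Fact.out : p.Prime).one_lt] at h
  exact k.not_succ_le_self h

end HasLinearCoordinates

end LinearCoordinates

theorem stmt_10 (f : ℤ_[p] → ℤ_[p])
    (hlip : ∀ x y : ℤ_[p], ‖f x - f y‖ ≤ ‖x - y‖)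
    (α : (k : ℕ) → Fin (k + 1) → ZMod p)
    (hcoord : ∀ (x : ℤ_[p]) (k : ℕ),
      ((digit p (f x) k : ZMod p)) = ∑ i, α k i * (digit p x i : ZMod p)) :
    MeasurePreserving f (haarZp p) (haarZp p) ↔ ∀ k : ℕ, α k (Fin.last k) ≠ 0 := by
  have hf : LipschitzWith 1 f := .of_dist_le_mul fun x y => by simpa [dist_eq_norm] using hlip x y
  have hlin : HasLinearCoordinates f α := hcoord
  rw [hf.measurePreserving_haarZp_iff]
  constructor
  · intro hbij k hk
    exact hlin.not_injective_reductionMod hf hk (hbij (k + 1)).injective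
  · intro hα n
    exact Finite.injective_iff_bijective.mp (hlin.reductionMod_injective hα n)
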